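/- arXiv:2605.09831 — 5 statements merged into one kernel-verified Lean document; each statement's English description precedes it below -/
import Mathlib

section
/- Assume E = {y ∈ [0,1] : ūA(y) = ūB(y)} is finite and every point of E ∩ (0,1) is either attracting or non-attracting. If a < b are two attracting equilibria such that no attracting equilibrium lies in the open interval (a, b), then there is exactly one non-attracting equilibrium in (a, b). -/
open scoped Classical
open MeasureTheory Filter Set

/-- Maximum of finitely many polynomial utilities at `y`. -/
noncomputable def ubar {p : ℕ} (u : Fin p → Polynomial ℝ) (y : ℝ) : ℝ :=
  ⨆ i, (u i).eval y

/-- The set-valued map of the abstract imitation dynamics. -/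
noncomputable def Xset {p : ℕ} (uA uB : Fin p → Polynomial ℝ) (z : ℝ) : Set ℝ :=
  if ubar uB z < ubar uA z then {1 - z}
  else if ubar uA z < ubar uB z then {-z}
  else Set.Icc (-z) (1 - z)

/-- A (Carathéodory) solution of the abstract imitation dynamics on `[0,∞)`:
a locally absolutely continuous `[0,1]`-valued function whose derivative lies in
`Xset` almost everywhere, expressed in integral form. -/
def IsAbsSol {p : ℕ} (uA uB : Fin p → Polynomial ℝ) (z : ℝ → ℝ) : Prop :=
  (∀ t, 0 ≤ t → z t ∈ Set.Icc (0:ℝ) 1) ∧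
  ∃ v : ℝ → ℝ,
    (∀ᵐ t ∂(MeasureTheory.volume.restrict (Set.Ici (0:ℝ))), v t ∈ Xset uA uB (z t)) ∧
    (∀ t, 0 ≤ t → IntervalIntegrable v MeasureTheory.volume 0 t) ∧
    (∀ t, 0 ≤ t → z t = z 0 + ∫ s in (0:ℝ)..t, v s)

/-- The equilibrium set `E = {y ∈ [0,1] : ūA(y) = ūB(y)}`. -/
noncomputable def Eset {p : ℕ} (uA uB : Fin p → Polynomial ℝ) : Set ℝ :=
  {y ∈ Set.Icc (0:ℝ) 1 | ubar uA y = ubar uB y}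

/-- An interior attracting equilibrium: `q ∈ E ∩ (0,1)` with `ūA > ūB` just to the left of `q`
and `ūB > ūA` just to the right of `q`. -/
def AttractingInterior {p : ℕ} (uA uB : Fin p → Polynomial ℝ) (q : ℝ) : Prop :=
  q ∈ Eset uA uB ∧ q ∈ Set.Ioo (0:ℝ) 1 ∧
    ∃ ε > 0, (∀ y ∈ Set.Ioo (q - ε) q, ubar uB y < ubar uA y) ∧
      (∀ y ∈ Set.Ioo q (q + ε), ubar uA y < ubar uB y)

/-- A non-attracting equilibrium: `q ∈ E ∩ (0,1)` with `ūB > ūA` just to the left of `q`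
and `ūA > ūB` just to the right of `q`. -/
def NonAttracting {p : ℕ} (uA uB : Fin p → Polynomial ℝ) (q : ℝ) : Prop :=
  q ∈ Eset uA uB ∧ q ∈ Set.Ioo (0:ℝ) 1 ∧
    ∃ ε > 0, (∀ y ∈ Set.Ioo (q - ε) q, ubar uA y < ubar uB y) ∧
      (∀ y ∈ Set.Ioo q (q + ε), ubar uB y < ubar uA y)

/-- An attracting equilibrium: either the endpoint `0` (with `ūB > ūA` just to its right),
the endpoint `1` (with `ūA > ūB` just to its left), or an interior attracting equilibrium. -/
def AttractingEq {p : ℕ} (uA uB : Fin p → Polynomial ℝ) (q : ℝ) : Prop :=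
  (q = 0 ∧ ∃ ε > 0, ∀ y ∈ Set.Ioo (0:ℝ) ε, ubar uA y < ubar uB y) ∨
  (q = 1 ∧ ∃ ε > 0, ∀ y ∈ Set.Ioo (1 - ε) 1, ubar uB y < ubar uA y) ∨
  AttractingInterior uA uB q

lemma ubar_cont {p : ℕ} (hp : 0 < p) (u : Fin p → Polynomial ℝ) :
    Continuous (ubar u) := by
  have : Nonempty (Fin p) := ⟨⟨0, hp⟩⟩
  have h : ubar u = fun y => Finset.univ.sup' Finset.univ_nonempty (fun i => (u i).eval y) := by
    funext y
    rw [Finset.sup'_univ_eq_ciSup]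
    rfl
  rw [h]
  exact Continuous.finset_sup'_apply Finset.univ_nonempty
    (fun i _ => (u i).continuous_aeval)

lemma exists_first_zero (f : ℝ → ℝ) (hf : Continuous f) {x0 c : ℝ} (hx0c : x0 ≤ c)
    (hfin : {x ∈ Set.Icc x0 c | f x = 0}.Finite) (hx0 : 0 < f x0) (hc : f c = 0) :
    ∃ r ∈ Set.Ioc x0 c, f r = 0 ∧ ∀ y ∈ Set.Ico x0 r, 0 < f y := by
  set T := {x ∈ Set.Icc x0 c | f x = 0} with hT
  have hTne : T.Nonempty := ⟨c, ⟨⟨hx0c, le_refl c⟩, hc⟩⟩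
  have hFne : hfin.toFinset.Nonempty := by
    rwa [Set.Finite.toFinset_nonempty]
  set r := hfin.toFinset.min' hFne with hr
  have hrT : r ∈ T := by
    have := hfin.toFinset.min'_mem hFne
    rwa [Set.Finite.mem_toFinset] at this
  have hmin : ∀ x ∈ T, r ≤ x := fun x hx =>
    hfin.toFinset.min'_le x (hfin.mem_toFinset.mpr hx)
  obtain ⟨⟨hrx0, hrc⟩, hr0⟩ := hrT
  have hx0r : x0 < r := by
    rcases lt_or_eq_of_le hrx0 with h | h
    · exact h
    · exfalso; rw [← h] at hr0; linarith
  refine ⟨r, ⟨hx0r, hrc⟩, hr0, ?_⟩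
  intro y ⟨hy1, hy2⟩
  by_contra hle
  push_neg at hle
  rcases lt_or_eq_of_le hle with hlt | heq
  · -- f y < 0, IVT gives a zero in [x0, y]
    have hsub : Set.Icc (f y) (f x0) ⊆ f '' Set.Icc x0 y :=
      intermediate_value_Icc' hy1 hf.continuousOn
    have h0 : (0:ℝ) ∈ Set.Icc (f y) (f x0) := ⟨le_of_lt hlt, le_of_lt hx0⟩
    obtain ⟨z, ⟨hz1, hz2⟩, hz0⟩ := hsub h0
    have hzT : z ∈ T := ⟨⟨hz1, le_trans hz2 (le_trans (le_of_lt hy2) hrc)⟩, hz0⟩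
    have := hmin z hzT
    linarith
  · have hyT : y ∈ T := ⟨⟨hy1, le_trans (le_of_lt hy2) hrc⟩, heq⟩
    have := hmin y hyT
    linarith

theorem unique_nonattracting_between_consecutive_attracting
    {p : ℕ} (hp : 0 < p) (uA uB : Fin p → Polynomial ℝ)
    (hE : (Eset uA uB).Finite)
    (hdich : ∀ q ∈ Eset uA uB ∩ Set.Ioo (0:ℝ) 1,
      AttractingInterior uA uB q ∨ NonAttracting uA uB q)
    (a b : ℝ) (hab : a < b)
    (ha : AttractingEq uA uB a) (hb : AttractingEq uA uB b)
    (hno : ∀ q ∈ Set.Ioo a b, ¬ AttractingEq uA uB q) :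
    ∃! q : ℝ, q ∈ Set.Ioo a b ∧ NonAttracting uA uB q := by
  set f : ℝ → ℝ := fun y => ubar uA y - ubar uB y with hfdef
  have hfc : Continuous f := (ubar_cont hp uA).sub (ubar_cont hp uB)
  -- basic bounds
  have hb1 : b ≤ 1 := by
    rcases hb with ⟨h, _⟩ | ⟨h, _⟩ | ⟨_, hI, _⟩
    · rw [h]; norm_num
    · rw [h]
    · exact le_of_lt hI.2
  have ha0 : 0 ≤ a := by
    rcases ha with ⟨h, _⟩ | ⟨h, _⟩ | ⟨_, hI, _⟩
    · rw [h]
    · rw [h]; norm_num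
    · exact le_of_lt hI.1
  -- sign of f just to the right of a
  have haR : ∃ ε > 0, ∀ y ∈ Set.Ioo a (a + ε), f y < 0 := by
    rcases ha with ⟨h, ε, hε, hcond⟩ | ⟨h, _⟩ | ⟨_, _, ε, hε, _, hcond⟩
    · refine ⟨ε, hε, fun y hy => ?_⟩
      have := hcond y (by rw [h] at hy; simpa using hy)
      simp only [hfdef]; linarith
    · exfalso; rw [h] at hab; linarith
    · refine ⟨ε, hε, fun y hy => ?_⟩
      have := hcond y hy
      simp only [hfdef]; linarith
  -- sign of f just to the left of b
  have hbL : ∃ ε > 0, ∀ y ∈ Set.Ioo (b - ε) b, 0 < f y := by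
    rcases hb with ⟨h, _⟩ | ⟨h, ε, hε, hcond⟩ | ⟨_, _, ε, hε, hcond, _⟩
    · exfalso; rw [h] at hab; linarith
    · refine ⟨ε, hε, fun y hy => ?_⟩
      have := hcond y (by rw [h] at hy; simpa using hy)
      simp only [hfdef]; linarith
    · refine ⟨ε, hε, fun y hy => ?_⟩
      have := hcond y hy
      simp only [hfdef]; linarith
  -- any zero of f in (a,b) is a non-attracting equilibrium
  have hzero : ∀ q ∈ Set.Ioo a b, f q = 0 → NonAttracting uA uB q := by
    intro q hq hq0
    have hqI : q ∈ Set.Ioo (0:ℝ) 1 := ⟨lt_of_le_of_lt ha0 hq.1, lt_of_lt_of_le hq.2 hb1⟩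
    have hqE : q ∈ Eset uA uB := by
      refine ⟨⟨le_of_lt hqI.1, le_of_lt hqI.2⟩, ?_⟩
      have : ubar uA q - ubar uB q = 0 := hq0
      linarith
    rcases hdich q ⟨hqE, hqI⟩ with h | h
    · exact absurd (Or.inr (Or.inr h)) (hno q hq)
    · exact h
  -- existence
  obtain ⟨εa, hεa, hfa⟩ := haR
  obtain ⟨εb, hεb, hfb⟩ := hbL
  set x0 := min (a + εa / 2) ((a + b) / 2) with hx0def
  set y0 := max (b - εb / 2) ((a + b) / 2) with hy0def
  have hax0 : a < x0 := lt_min (by linarith) (by linarith)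
  have hx0a : x0 < a + εa := lt_of_le_of_lt (min_le_left _ _) (by linarith)
  have hx0m : x0 ≤ (a + b) / 2 := min_le_right _ _
  have hmy0 : (a + b) / 2 ≤ y0 := le_max_right _ _
  have hy0b : y0 < b := max_lt (by linarith) (by linarith)
  have hby0 : b - εb < y0 := lt_of_lt_of_le (by linarith) (le_max_left _ _)
  have hx0y0 : x0 ≤ y0 := le_trans hx0m hmy0
  have hfx0 : f x0 < 0 := hfa x0 ⟨hax0, hx0a⟩
  have hfy0 : 0 < f y0 := hfb y0 ⟨hby0, hy0b⟩
  have hsub : Set.Icc (f x0) (f y0) ⊆ f '' Set.Icc x0 y0 :=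
    intermediate_value_Icc hx0y0 hfc.continuousOn
  obtain ⟨q, ⟨hq1, hq2⟩, hq0⟩ := hsub ⟨le_of_lt hfx0, le_of_lt hfy0⟩
  have hqab : q ∈ Set.Ioo a b := ⟨lt_of_lt_of_le hax0 hq1, lt_of_le_of_lt hq2 hy0b⟩
  have hqNA : NonAttracting uA uB q := hzero q hqab hq0
  -- uniqueness: no two distinct non-attracting equilibria in (a,b)
  have key : ∀ q1 q2, q1 ∈ Set.Ioo a b → q2 ∈ Set.Ioo a b →
      NonAttracting uA uB q1 → NonAttracting uA uB q2 → q1 < q2 → False := by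
    intro q1 q2 hq1ab hq2ab h1 h2 h12
    obtain ⟨hq1E, hq1I, ε1, hε1, _, hR1⟩ := h1
    obtain ⟨hq2E, hq2I, ε2, hε2, hL2, _⟩ := h2
    set z0 := min (q1 + ε1 / 2) ((q1 + q2) / 2) with hz0def
    have hq1z0 : q1 < z0 := lt_min (by linarith) (by linarith)
    have hz0e : z0 < q1 + ε1 := lt_of_le_of_lt (min_le_left _ _) (by linarith)
    have hz0q2 : z0 < q2 := lt_of_le_of_lt (min_le_right _ _) (by linarith)
    have hfz0 : 0 < f z0 := by
      have := hR1 z0 ⟨hq1z0, hz0e⟩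
      simp only [hfdef]; linarith
    have hfq2 : f q2 = 0 := by
      have := hq2E.2
      simp only [hfdef]; linarith
    have hfin : {x ∈ Set.Icc z0 q2 | f x = 0}.Finite := by
      refine hE.subset ?_
      rintro x ⟨⟨hx1, hx2⟩, hx0⟩
      refine ⟨⟨?_, ?_⟩, ?_⟩
      · linarith [hq1ab.1]
      · linarith [hq2ab.2]
      · have : ubar uA x - ubar uB x = 0 := hx0
        linarith
    obtain ⟨r, ⟨hz0r, hrq2⟩, hr0, hpos⟩ :=
      exists_first_zero f hfc (le_of_lt hz0q2) hfin hfz0 hfq2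
    rcases lt_or_eq_of_le hrq2 with hlt | heq
    · -- r < q2 : r is a zero in (a,b), hence non-attracting; contradiction with hpos
      have hrab : r ∈ Set.Ioo a b := ⟨by linarith [hq1ab.1], by linarith [hq2ab.2]⟩
      obtain ⟨_, _, εr, hεr, hLr, _⟩ := hzero r hrab hr0
      set y := max (r - εr / 2) ((z0 + r) / 2) with hydef
      have hyr : y < r := max_lt (by linarith) (by linarith)
      have hyl : r - εr < y := lt_of_lt_of_le (by linarith) (le_max_left _ _)
      have hz0y : z0 ≤ y := le_trans (by linarith) (le_max_right _ _)
      have h1' := hLr y ⟨hyl, hyr⟩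
      have h2' := hpos y ⟨hz0y, hyr⟩
      simp only [hfdef] at h2'
      linarith
    · -- r = q2 : contradiction with f < 0 just left of q2
      set y := max (q2 - ε2 / 2) ((z0 + q2) / 2) with hydef
      have hyr : y < q2 := max_lt (by linarith) (by linarith)
      have hyl : q2 - ε2 < y := lt_of_lt_of_le (by linarith) (le_max_left _ _)
      have hz0y : z0 ≤ y := le_trans (by linarith) (le_max_right _ _)
      have h1' := hL2 y ⟨hyl, hyr⟩
      have h2' := hpos y ⟨hz0y, by rw [heq]; exact hyr⟩
      simp only [hfdef] at h2'
      linarith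
  refine ⟨q, ⟨hqab, hqNA⟩, ?_⟩
  rintro y ⟨hyab, hyNA⟩
  rcases lt_trichotomy y q with h | h | h
  · exact absurd (key y q hyab hqab hyNA hqNA h) (not_false)
  · exact h
  · exact absurd (key q y hqab hyab hqNA hyNA h) (not_false)
end

section
/- Suppose a < q < b are points of [0,1] with ūA(y) > ūB(y) for all y ∈ (a, q) and ūB(y) > ūA(y) for all y ∈ (q, b). Then q is an asymptotically stable equilibrium of the abstract imitation dynamics whose basin of attraction contains (a, b): (i) for every ε > 0 there is δ > 0 such that every solution z with |z(0) − q| < δ satisfies |z(t) − q| < ε for all t ≥ 0; and (ii) every solution z with z(0) ∈ (a, b) satisfies z(t) → q as t → ∞. -/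
open scoped Classical
open MeasureTheory Filter Set

/-- Last-exit / first-entrance crossing lemma for continuous functions. -/
lemma crossing_aux {z : ℝ → ℝ} {s t1 c c' : ℝ} (hst : s ≤ t1)
    (hcont : ContinuousOn z (Set.Icc s t1)) (hzs : z s ≤ c) (hzt : c' ≤ z t1) (hcc : c < c') :
    ∃ s1 t2, s ≤ s1 ∧ s1 < t2 ∧ t2 ≤ t1 ∧ z s1 ≤ c ∧ c' ≤ z t2 ∧
      ∀ τ ∈ Set.Ioo s1 t2, c < z τ ∧ z τ < c' := by
  set S : Set ℝ := Icc s t1 ∩ z ⁻¹' Iic c with hSdef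
  have hScl : IsClosed S := hcont.preimage_isClosed_of_isClosed isClosed_Icc isClosed_Iic
  have hSne : S.Nonempty := ⟨s, ⟨le_rfl, hst⟩, hzs⟩
  have hSbd : BddAbove S := bddAbove_Icc.mono inter_subset_left
  set s1 := sSup S with hs1def
  obtain ⟨⟨hss1, hs1t1⟩, hzs1⟩ : s1 ∈ S := hScl.csSup_mem hSne hSbd
  simp only [mem_preimage, mem_Iic] at hzs1
  set T : Set ℝ := Icc s1 t1 ∩ z ⁻¹' Ici c' with hTdef
  have hTcl : IsClosed T :=
    (hcont.mono (Icc_subset_Icc_left hss1)).preimage_isClosed_of_isClosed isClosed_Icc isClosed_Ici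
  have hTne : T.Nonempty := ⟨t1, ⟨hs1t1, le_rfl⟩, hzt⟩
  have hTbd : BddBelow T := bddBelow_Icc.mono inter_subset_left
  set t2 := sInf T with ht2def
  obtain ⟨⟨hs1t2, ht2t1⟩, hzt2⟩ : t2 ∈ T := hTcl.csInf_mem hTne hTbd
  simp only [mem_preimage, mem_Ici] at hzt2
  have hlt : s1 < t2 := by
    rcases lt_or_eq_of_le hs1t2 with h | h
    · exact h
    · exfalso; rw [← h] at hzt2; linarith
  refine ⟨s1, t2, hss1, hlt, ht2t1, hzs1, hzt2, ?_⟩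
  intro τ hτ
  constructor
  · by_contra h
    push_neg at h
    have : τ ∈ S := ⟨⟨hss1.trans hτ.1.le, hτ.2.le.trans ht2t1⟩, h⟩
    exact absurd (le_csSup hSbd this) (not_le.2 hτ.1)
  · by_contra h
    push_neg at h
    have : τ ∈ T := ⟨⟨hτ.1.le, hτ.2.le.trans ht2t1⟩, h⟩
    exact absurd (csInf_le hTbd this) (not_le.2 hτ.2)

/-- Continuity of a solution on compact intervals. -/
lemma sol_continuousOn {z v : ℝ → ℝ}
    (hvi : ∀ t, 0 ≤ t → IntervalIntegrable v MeasureTheory.volume 0 t)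
    (hz : ∀ t, 0 ≤ t → z t = z 0 + ∫ s in (0:ℝ)..t, v s)
    {T : ℝ} (hT : 0 ≤ T) : ContinuousOn z (Set.Icc 0 T) := by
  have h1 : ContinuousOn (fun t => z 0 + ∫ s in (0:ℝ)..t, v s) (Icc 0 T) := by
    apply continuousOn_const.add
    have := intervalIntegral.continuousOn_primitive_interval' (hvi T hT) left_mem_uIcc
    rwa [uIcc_of_le hT] at this
  exact h1.congr fun t ht => hz t ht.1

/-- Integrability on subintervals and the increment formula. -/
lemma sol_diff {z v : ℝ → ℝ}
    (hvi : ∀ t, 0 ≤ t → IntervalIntegrable v MeasureTheory.volume 0 t)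
    (hz : ∀ t, 0 ≤ t → z t = z 0 + ∫ s in (0:ℝ)..t, v s)
    {s t : ℝ} (hs : 0 ≤ s) (hst : s ≤ t) :
    IntervalIntegrable v MeasureTheory.volume s t ∧ z t = z s + ∫ τ in s..t, v τ := by
  have ht : (0:ℝ) ≤ t := hs.trans hst
  have hii : IntervalIntegrable v MeasureTheory.volume s t :=
    (hvi t ht).mono_set (by rw [uIcc_of_le hst, uIcc_of_le ht]; exact Icc_subset_Icc hs le_rfl)
  refine ⟨hii, ?_⟩
  have hadd := intervalIntegral.integral_add_adjacent_intervals (hvi s hs) hii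
  rw [hz t ht, hz s hs, ← hadd]
  ring

/-- Upper invariance: once at or below `c`, a solution stays below `c'`. -/
lemma upper_inv {p : ℕ} {uA uB : Fin p → Polynomial ℝ} {q b : ℝ} (hq0 : 0 ≤ q)
    (hright : ∀ y ∈ Set.Ioo q b, ubar uA y < ubar uB y)
    {z v : ℝ → ℝ}
    (hv : ∀ᵐ t ∂(MeasureTheory.volume.restrict (Set.Ici (0:ℝ))), v t ∈ Xset uA uB (z t))
    (hvi : ∀ t, 0 ≤ t → IntervalIntegrable v MeasureTheory.volume 0 t)
    (hz : ∀ t, 0 ≤ t → z t = z 0 + ∫ s in (0:ℝ)..t, v s)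
    {c c' : ℝ} (hqc : q < c) (hcc : c < c') (hcb : c' < b)
    {s t : ℝ} (hs : 0 ≤ s) (hst : s ≤ t) (hzs : z s ≤ c) : z t < c' := by
  by_contra hcon
  push_neg at hcon
  obtain ⟨s1, t2, hss1, h12, ht2t, hzs1, hzt2, hmid⟩ :=
    crossing_aux hst
      ((sol_continuousOn hvi hz (hs.trans hst)).mono (Icc_subset_Icc hs le_rfl)) hzs hcon hcc
  have hs1 : (0:ℝ) ≤ s1 := hs.trans hss1
  obtain ⟨hii, hdiff⟩ := sol_diff hvi hz hs1 h12.le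
  have hae : ∀ᵐ τ ∂(MeasureTheory.volume.restrict (Set.Ioc s1 t2)), v τ ≤ 0 := by
    rw [← Measure.restrict_congr_set Ioo_ae_eq_Ioc]
    have h1 : ∀ᵐ τ ∂(MeasureTheory.volume.restrict (Set.Ioo s1 t2)), v τ ∈ Xset uA uB (z τ) :=
      ae_restrict_of_ae_restrict_of_subset (fun x hx => hs1.trans hx.1.le) hv
    have h2 : ∀ᵐ τ ∂(MeasureTheory.volume.restrict (Set.Ioo s1 t2)), τ ∈ Set.Ioo s1 t2 :=
      ae_restrict_mem measurableSet_Ioo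
    filter_upwards [h1, h2] with τ hτ1 hτ2
    obtain ⟨hc1, hc2⟩ := hmid τ hτ2
    have hXB := hright (z τ) ⟨hqc.trans hc1, hc2.trans hcb⟩
    rw [Xset, if_neg (not_lt.2 hXB.le), if_pos hXB, Set.mem_singleton_iff] at hτ1
    rw [hτ1]
    linarith
  have hint : ∫ τ in s1..t2, v τ ≤ 0 := by
    rw [intervalIntegral.integral_of_le h12.le]
    exact integral_nonpos_of_ae hae
  linarith

/-- Lower invariance: once at or above `c`, a solution stays above `c'`. -/
lemma lower_inv {p : ℕ} {uA uB : Fin p → Polynomial ℝ} {a q : ℝ} (hq1 : q ≤ 1)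
    (hleft : ∀ y ∈ Set.Ioo a q, ubar uB y < ubar uA y)
    {z v : ℝ → ℝ}
    (hv : ∀ᵐ t ∂(MeasureTheory.volume.restrict (Set.Ici (0:ℝ))), v t ∈ Xset uA uB (z t))
    (hvi : ∀ t, 0 ≤ t → IntervalIntegrable v MeasureTheory.volume 0 t)
    (hz : ∀ t, 0 ≤ t → z t = z 0 + ∫ s in (0:ℝ)..t, v s)
    {c c' : ℝ} (hac : a < c') (hcc : c' < c) (hcq : c < q)
    {s t : ℝ} (hs : 0 ≤ s) (hst : s ≤ t) (hzs : c ≤ z s) : c' < z t := by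
  by_contra hcon
  push_neg at hcon
  obtain ⟨s1, t2, hss1, h12, ht2t, hzs1, hzt2, hmid⟩ :=
    crossing_aux (z := fun τ => -z τ) (c := -c) (c' := -c') hst
      (((sol_continuousOn hvi hz (hs.trans hst)).mono (Icc_subset_Icc hs le_rfl)).neg)
      (neg_le_neg hzs) (neg_le_neg hcon) (neg_lt_neg hcc)
  have hs1 : (0:ℝ) ≤ s1 := hs.trans hss1
  obtain ⟨hii, hdiff⟩ := sol_diff hvi hz hs1 h12.le
  have hae : ∀ᵐ τ ∂(MeasureTheory.volume.restrict (Set.Ioc s1 t2)), 0 ≤ v τ := by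
    rw [← Measure.restrict_congr_set Ioo_ae_eq_Ioc]
    have h1 : ∀ᵐ τ ∂(MeasureTheory.volume.restrict (Set.Ioo s1 t2)), v τ ∈ Xset uA uB (z τ) :=
      ae_restrict_of_ae_restrict_of_subset (fun x hx => hs1.trans hx.1.le) hv
    have h2 : ∀ᵐ τ ∂(MeasureTheory.volume.restrict (Set.Ioo s1 t2)), τ ∈ Set.Ioo s1 t2 :=
      ae_restrict_mem measurableSet_Ioo
    filter_upwards [h1, h2] with τ hτ1 hτ2
    obtain ⟨hc1, hc2⟩ := hmid τ hτ2
    have hzmem : z τ ∈ Set.Ioo a q := by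
      constructor <;> [linarith; linarith]
    have hXA := hleft (z τ) hzmem
    rw [Xset, if_pos hXA, Set.mem_singleton_iff] at hτ1
    rw [hτ1]
    have : z τ < q := hzmem.2
    linarith
  have hint : 0 ≤ ∫ τ in s1..t2, v τ := by
    rw [intervalIntegral.integral_of_le h12.le]
    exact integral_nonneg_of_ae hae
  have h1 : c ≤ z s1 := by linarith [hzs1]
  have h2 : z t2 ≤ c' := by linarith [hzt2]
  linarith

/-- If a solution stays in `(q, b)` forever it drifts to `-∞`, impossible. -/
lemma drift_down {p : ℕ} {uA uB : Fin p → Polynomial ℝ} {q b : ℝ} (hq0 : 0 < q)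
    (hright : ∀ y ∈ Set.Ioo q b, ubar uA y < ubar uB y)
    {z v : ℝ → ℝ}
    (hz01 : ∀ t, 0 ≤ t → z t ∈ Set.Icc (0:ℝ) 1)
    (hv : ∀ᵐ t ∂(MeasureTheory.volume.restrict (Set.Ici (0:ℝ))), v t ∈ Xset uA uB (z t))
    (hvi : ∀ t, 0 ≤ t → IntervalIntegrable v MeasureTheory.volume 0 t)
    (hz : ∀ t, 0 ≤ t → z t = z 0 + ∫ s in (0:ℝ)..t, v s)
    (h : ∀ t, 0 ≤ t → q < z t ∧ z t < b) : False := by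
  have hae : ∀ᵐ τ ∂(MeasureTheory.volume.restrict (Set.Ici (0:ℝ))), v τ ≤ -q := by
    have h2 : ∀ᵐ τ ∂(MeasureTheory.volume.restrict (Set.Ici (0:ℝ))), τ ∈ Set.Ici (0:ℝ) :=
      ae_restrict_mem measurableSet_Ici
    filter_upwards [hv, h2] with τ h1 hτ
    obtain ⟨ha1, ha2⟩ := h τ hτ
    have hXB := hright (z τ) ⟨ha1, ha2⟩
    rw [Xset, if_neg (not_lt.2 hXB.le), if_pos hXB, Set.mem_singleton_iff] at h1
    rw [h1]; linarith
  set T : ℝ := (z 0 + 1) / q with hTdef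
  have h00 := (hz01 0 le_rfl).1
  have hT0 : 0 ≤ T := div_nonneg (by linarith) hq0.le
  have hmono : ∫ τ in (0:ℝ)..T, v τ ≤ ∫ τ in (0:ℝ)..T, (-q) :=
    intervalIntegral.integral_mono_ae_restrict hT0 (hvi T hT0) intervalIntegrable_const
      (ae_restrict_of_ae_restrict_of_subset (fun x hx => hx.1) hae)
  rw [intervalIntegral.integral_const, smul_eq_mul] at hmono
  have hqT : q * T = z 0 + 1 := by
    rw [hTdef]; field_simp
  have hzT := hz T hT0
  have hTlb := (hz01 T hT0).1
  nlinarith [hmono, hzT, hTlb, hqT]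

/-- If a solution stays in `(a, q)` forever it drifts to `+∞`, impossible. -/
lemma drift_up {p : ℕ} {uA uB : Fin p → Polynomial ℝ} {a q : ℝ} (hq1 : q < 1)
    (hleft : ∀ y ∈ Set.Ioo a q, ubar uB y < ubar uA y)
    {z v : ℝ → ℝ}
    (hz01 : ∀ t, 0 ≤ t → z t ∈ Set.Icc (0:ℝ) 1)
    (hv : ∀ᵐ t ∂(MeasureTheory.volume.restrict (Set.Ici (0:ℝ))), v t ∈ Xset uA uB (z t))
    (hvi : ∀ t, 0 ≤ t → IntervalIntegrable v MeasureTheory.volume 0 t)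
    (hz : ∀ t, 0 ≤ t → z t = z 0 + ∫ s in (0:ℝ)..t, v s)
    (h : ∀ t, 0 ≤ t → a < z t ∧ z t < q) : False := by
  have hae : ∀ᵐ τ ∂(MeasureTheory.volume.restrict (Set.Ici (0:ℝ))), 1 - q ≤ v τ := by
    have h2 : ∀ᵐ τ ∂(MeasureTheory.volume.restrict (Set.Ici (0:ℝ))), τ ∈ Set.Ici (0:ℝ) :=
      ae_restrict_mem measurableSet_Ici
    filter_upwards [hv, h2] with τ h1 hτ
    obtain ⟨ha1, ha2⟩ := h τ hτ
    have hXA := hleft (z τ) ⟨ha1, ha2⟩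
    rw [Xset, if_pos hXA, Set.mem_singleton_iff] at h1
    rw [h1]; linarith
  set T : ℝ := 2 / (1 - q) with hTdef
  have hq1' : 0 < 1 - q := by linarith
  have hT0 : 0 ≤ T := div_nonneg (by norm_num) hq1'.le
  have hmono : ∫ τ in (0:ℝ)..T, (1 - q) ≤ ∫ τ in (0:ℝ)..T, v τ :=
    intervalIntegral.integral_mono_ae_restrict hT0 intervalIntegrable_const (hvi T hT0)
      (ae_restrict_of_ae_restrict_of_subset (fun x hx => hx.1) hae)
  rw [intervalIntegral.integral_const, smul_eq_mul] at hmono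
  have hqT : (1 - q) * T = 2 := by
    rw [hTdef]; field_simp
  have hzT := hz T hT0
  have h00 := (hz01 0 le_rfl).1
  have hTub := (hz01 T hT0).2
  nlinarith [hmono, hzT, hTub, hqT, h00]

theorem abstract_asymptotic_stability
    {p : ℕ} (hp : 0 < p) (uA uB : Fin p → Polynomial ℝ)
    (a q b : ℝ) (ha : a ∈ Set.Icc (0:ℝ) 1) (hb : b ∈ Set.Icc (0:ℝ) 1)
    (haq : a < q) (hqb : q < b)
    (hleft : ∀ y ∈ Set.Ioo a q, ubar uB y < ubar uA y)
    (hright : ∀ y ∈ Set.Ioo q b, ubar uA y < ubar uB y) :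
    (∀ ε > 0, ∃ δ > 0, ∀ z : ℝ → ℝ, IsAbsSol uA uB z → |z 0 - q| < δ →
      ∀ t ≥ (0:ℝ), |z t - q| < ε) ∧
    (∀ z : ℝ → ℝ, IsAbsSol uA uB z → z 0 ∈ Set.Ioo a b →
      Filter.Tendsto z Filter.atTop (nhds q)) := by
  have hq0 : (0:ℝ) ≤ q := le_of_lt (lt_of_le_of_lt ha.1 haq)
  have hq0' : (0:ℝ) < q := lt_of_le_of_lt ha.1 haq
  have hq1 : q ≤ 1 := le_of_lt (lt_of_lt_of_le hqb hb.2)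
  have hq1' : q < 1 := lt_of_lt_of_le hqb hb.2
  constructor
  · -- stability
    intro ε hε
    set m : ℝ := min ε (min (b - q) (q - a)) with hmdef
    have hm : 0 < m := by
      apply lt_min hε
      apply lt_min <;> linarith
    have hmε : m ≤ ε := min_le_left _ _
    have hmb : m ≤ b - q := (min_le_right _ _).trans (min_le_left _ _)
    have hma : m ≤ q - a := (min_le_right _ _).trans (min_le_right _ _)
    refine ⟨m / 4, by positivity, ?_⟩
    intro z hsol hz0 t ht
    obtain ⟨hz01, v, hv, hvi, hz⟩ := hsol
    rw [abs_sub_lt_iff] at hz0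
    have hup : z t < q + m / 2 := by
      refine upper_inv hq0 hright hv hvi hz (c := q + m / 4) (c' := q + m / 2)
        (by linarith) (by linarith) (by linarith) le_rfl ht (by linarith [hz0.1])
    have hdown : q - m / 2 < z t := by
      refine lower_inv hq1 hleft hv hvi hz (c' := q - m / 2) (c := q - m / 4)
        (by linarith) (by linarith) (by linarith) le_rfl ht (by linarith [hz0.2])
    rw [abs_sub_lt_iff]
    constructor <;> linarith
  · -- attraction
    intro z hsol hz0
    obtain ⟨hz01, v, hv, hvi, hz⟩ := hsol
    obtain ⟨hz0a, hz0b⟩ := hz0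
    -- global upper guard
    set C : ℝ := max (z 0) ((q + b) / 2) with hCdef
    have hqC : q < C := lt_of_lt_of_le (by linarith) (le_max_right _ _)
    have hCb : C < b := max_lt hz0b (by linarith)
    set C' : ℝ := (C + b) / 2 with hC'def
    have hCC' : C < C' := by rw [hC'def]; linarith
    have hC'b : C' < b := by rw [hC'def]; linarith
    have guard_up : ∀ t, 0 ≤ t → z t < C' := fun t ht =>
      upper_inv hq0 hright hv hvi hz hqC hCC' hC'b le_rfl ht (le_max_left _ _)
    -- global lower guard
    set c : ℝ := min (z 0) ((a + q) / 2) with hcdef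
    have hac : a < c := lt_min hz0a (by linarith)
    have hcq : c < q := lt_of_le_of_lt (min_le_right _ _) (by linarith)
    set c2 : ℝ := (a + c) / 2 with hc2def
    have hc2c : c2 < c := by rw [hc2def]; linarith
    have hac2 : a < c2 := by rw [hc2def]; linarith
    have guard_down : ∀ t, 0 ≤ t → c2 < z t := fun t ht =>
      lower_inv hq1 hleft hv hvi hz hac2 hc2c hcq le_rfl ht (min_le_left _ _)
    rw [Metric.tendsto_atTop]
    intro ε hε
    set e : ℝ := min ε (min (b - q) (q - a)) / 2 with hedef
    have he : 0 < e := by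
      apply div_pos _ (by norm_num)
      apply lt_min hε
      apply lt_min <;> linarith
    have heε : e ≤ ε / 2 := by
      rw [hedef]
      apply div_le_div_of_nonneg_right (min_le_left _ _)
      norm_num
    have heb : q + e < b := by
      have : e ≤ (b - q) / 2 := by
        rw [hedef]
        apply div_le_div_of_nonneg_right ((min_le_right _ _).trans (min_le_left _ _))
        norm_num
      linarith
    have hea : a < q - e := by
      have : e ≤ (q - a) / 2 := by
        rw [hedef]
        apply div_le_div_of_nonneg_right ((min_le_right _ _).trans (min_le_right _ _))
        norm_num
      linarith
    -- reach below q + e/2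
    have hreach_up : ∃ T, 0 ≤ T ∧ z T ≤ q + e / 2 := by
      by_contra hcon
      push_neg at hcon
      refine drift_down hq0' hright hz01 hv hvi hz fun t ht => ⟨?_, (guard_up t ht).trans hC'b⟩
      have := hcon t ht
      linarith
    obtain ⟨T1, hT1, hzT1⟩ := hreach_up
    have hup : ∀ t, T1 ≤ t → z t < q + e := fun t htT =>
      upper_inv hq0 hright hv hvi hz (c := q + e / 2) (c' := q + e)
        (by linarith) (by linarith) heb hT1 htT hzT1
    -- reach above q - e/2
    have hreach_down : ∃ T, 0 ≤ T ∧ q - e / 2 ≤ z T := by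
      by_contra hcon
      push_neg at hcon
      refine drift_up hq1' hleft hz01 hv hvi hz fun t ht => ⟨guard_down t ht |>.trans_le' hac2.le, ?_⟩
      have := hcon t ht
      linarith
    obtain ⟨T2, hT2, hzT2⟩ := hreach_down
    have hdown : ∀ t, T2 ≤ t → q - e < z t := fun t htT =>
      lower_inv hq1 hleft hv hvi hz (c' := q - e) (c := q - e / 2)
        hea (by linarith) (by linarith) hT2 htT hzT2
    refine ⟨max T1 T2, fun t ht => ?_⟩
    have ht1 : T1 ≤ t := (le_max_left _ _).trans ht
    have ht2 : T2 ≤ t := (le_max_right _ _).trans ht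
    rw [Real.dist_eq, abs_sub_lt_iff]
    constructor
    · linarith [hup t ht1]
    · linarith [hdown t ht2]
end

section
/- Assume ūB(0) > ūA(0) and ūA(1) > ūB(1). (i) If c ∈ (0,1] is such that ūB(y) > ūA(y) for all y ∈ (0, c), then every solution z of the abstract imitation dynamics with z(0) ∈ [0, c) satisfies z(t) → 0 as t → ∞. (ii) If c ∈ [0,1) is such that ūA(y) > ūB(y) for all y ∈ (c, 1), then every solution z with z(0) ∈ (c, 1] satisfies z(t) → 1 as t → ∞. -/
open scoped Classical
open MeasureTheory Filter Set

/-!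
Below a threshold `c` with `ūB > ūA` on `[0, c)`, the dynamics reduce to `ż = -z`, so a solution
can never climb: at the first time it would reach `c` it has only been decreasing since time `0`.
Hence `ż = -z` holds for all time, `z` is antitone, and while `z ≥ ε` it falls at rate at least `ε`,
so it tends to `0`. The case of `1` follows by the symmetry `z ↦ 1 - z`, `y ↦ 1 - y`, `A ↔ B`.
-/

open Topology

section IntegralEquation

variable {z v : ℝ → ℝ}

lemma le_add_mul_of_ae_le (hv : ∀ t, 0 ≤ t → IntervalIntegrable v volume 0 t)
    (hz : ∀ t, 0 ≤ t → z t = z 0 + ∫ s in (0:ℝ)..t, v s) {a b m : ℝ} (ha : 0 ≤ a) (hab : a ≤ b)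
    (hvm : ∀ᵐ s, s ∈ Ioo a b → v s ≤ m) : z b ≤ z a + m * (b - a) := by
  have hb : 0 ≤ b := ha.trans hab
  have hdiff : z b - z a = ∫ s in a..b, v s := by
    rw [hz b hb, hz a ha, add_sub_add_left_eq_sub,
      intervalIntegral.integral_interval_sub_left (hv b hb) (hv a ha)]
  have hle : ∫ s in a..b, v s ≤ ∫ _ in a..b, m := by
    refine intervalIntegral.integral_mono_ae_restrict hab
      ((hv a ha).symm.trans (hv b hb)) intervalIntegrable_const ?_
    rw [← Measure.restrict_congr_set Ioo_ae_eq_Icc]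
    exact (ae_restrict_iff' measurableSet_Ioo).2 hvm
  rw [intervalIntegral.integral_const, smul_eq_mul] at hle
  linarith

lemma continuousOn_Icc_of_eq_integral (hv : ∀ t, 0 ≤ t → IntervalIntegrable v volume 0 t)
    (hz : ∀ t, 0 ≤ t → z t = z 0 + ∫ s in (0:ℝ)..t, v s) {b : ℝ} (hb : 0 ≤ b) :
    ContinuousOn z (Icc 0 b) := by
  have h := intervalIntegral.continuousOn_primitive_interval' (hv b hb) left_mem_uIcc
  rw [uIcc_of_le hb] at h
  exact (continuousOn_const.add h).congr fun t ht => hz t ht.1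

/-- Consider the first time `T ≤ t` with `z T ≥ c`: before it `v ≤ 0`, so `z T ≤ z 0 < c`. -/
lemma lt_of_ae_nonpos_below (hv : ∀ t, 0 ≤ t → IntervalIntegrable v volume 0 t)
    (hz : ∀ t, 0 ≤ t → z t = z 0 + ∫ s in (0:ℝ)..t, v s) {c : ℝ} (hc : z 0 < c)
    (hdec : ∀ᵐ s, 0 ≤ s → z s < c → v s ≤ 0) {t : ℝ} (ht : 0 ≤ t) : z t < c := by
  by_contra! hct
  set S := Icc 0 t ∩ z ⁻¹' Ici c
  have hS : IsClosed S :=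
    (continuousOn_Icc_of_eq_integral hv hz ht).preimage_isClosed_of_isClosed isClosed_Icc
      isClosed_Ici
  have hbdd : BddBelow S := ⟨0, fun s hs => hs.1.1⟩
  have hT : sInf S ∈ S := hS.csInf_mem ⟨t, ⟨ht, le_rfl⟩, hct⟩ hbdd
  have hbefore : ∀ s ∈ Ico 0 (sInf S), z s < c := fun s hs =>
    lt_of_not_ge fun h => hs.2.not_ge (csInf_le hbdd ⟨⟨hs.1, hs.2.le.trans hT.1.2⟩, h⟩)
  have hzT := le_add_mul_of_ae_le hv hz le_rfl hT.1.1 (m := 0) <| by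
    filter_upwards [hdec] with s hs hsT
    exact hs hsT.1.le (hbefore s ⟨hsT.1.le, hsT.2⟩)
  have hcT : c ≤ z (sInf S) := hT.2
  linarith

lemma tendsto_zero_of_ae_le_neg (hv : ∀ t, 0 ≤ t → IntervalIntegrable v volume 0 t)
    (hz : ∀ t, 0 ≤ t → z t = z 0 + ∫ s in (0:ℝ)..t, v s) (hnonneg : ∀ t, 0 ≤ t → 0 ≤ z t)
    (hvz : ∀ᵐ s, 0 ≤ s → v s ≤ -z s) : Tendsto z atTop (𝓝 0) := by
  have hanti : ∀ a b, 0 ≤ a → a ≤ b → z b ≤ z a := fun a b ha hab => by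
    have := le_add_mul_of_ae_le hv hz ha hab (m := 0) <| by
      filter_upwards [hvz] with s hs hsI
      linarith [hs (ha.trans hsI.1.le), hnonneg s (ha.trans hsI.1.le)]
    linarith
  refine tendsto_order.2 ⟨fun a ha => ?_, fun ε hε => ?_⟩
  · filter_upwards [eventually_ge_atTop 0] with t ht
    exact ha.trans_le (hnonneg t ht)
  filter_upwards [eventually_ge_atTop 0, eventually_gt_atTop (z 0 / ε)] with t ht htε
  by_contra! hεt
  have hzt := le_add_mul_of_ae_le hv hz le_rfl ht (m := -ε) <| by
    filter_upwards [hvz] with s hs hsI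
    linarith [hs hsI.1.le, hanti s t hsI.1.le hsI.2.le]
  have := (div_lt_iff₀ hε).1 htε
  linarith

end IntegralEquation

lemma Xset_eq_of_lt {p : ℕ} {uA uB : Fin p → Polynomial ℝ} {y : ℝ} (h : ubar uA y < ubar uB y) :
    Xset uA uB y = {-y} := by
  rw [Xset, if_neg h.not_gt, if_pos h]

theorem IsAbsSol.tendsto_zero {p : ℕ} {uA uB : Fin p → Polynomial ℝ} {z : ℝ → ℝ}
    (hz : IsAbsSol uA uB z) (h0 : ubar uA 0 < ubar uB 0) {c : ℝ}
    (hB : ∀ y ∈ Ioo 0 c, ubar uA y < ubar uB y) (hz0 : z 0 < c) : Tendsto z atTop (𝓝 0) := by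
  obtain ⟨hz01, v, hv_mem, hv_int, hz_eq⟩ := hz
  have hX : ∀ᵐ s, 0 ≤ s → z s < c → v s = -z s := by
    filter_upwards [(ae_restrict_iff' measurableSet_Ici).1 hv_mem] with s hs hs0 hsc
    have hlt : ubar uA (z s) < ubar uB (z s) := by
      rcases (hz01 s hs0).1.eq_or_lt with hzero | hpos
      · rwa [← hzero]
      · exact hB (z s) ⟨hpos, hsc⟩
    simpa [Xset_eq_of_lt hlt] using hs hs0
  have hbelow : ∀ t, 0 ≤ t → z t < c := fun t =>
    lt_of_ae_nonpos_below hv_int hz_eq hz0 <| by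
      filter_upwards [hX] with s hs hs0 hsc
      linarith [hs hs0 hsc, (hz01 s hs0).1]
  refine tendsto_zero_of_ae_le_neg hv_int hz_eq (fun t ht => (hz01 t ht).1) ?_
  filter_upwards [hX] with s hs hs0
  exact (hs hs0 (hbelow s hs0)).le

noncomputable def reflectUtilities {p : ℕ} (u : Fin p → Polynomial ℝ) : Fin p → Polynomial ℝ :=
  fun i => (u i).comp (1 - Polynomial.X)

lemma ubar_reflectUtilities {p : ℕ} (u : Fin p → Polynomial ℝ) (y : ℝ) :
    ubar (reflectUtilities u) y = ubar u (1 - y) := by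
  simp [ubar, reflectUtilities]

lemma neg_mem_Xset_reflectUtilities {p : ℕ} {uA uB : Fin p → Polynomial ℝ} {y w : ℝ}
    (hw : w ∈ Xset uA uB y) :
    -w ∈ Xset (reflectUtilities uB) (reflectUtilities uA) (1 - y) := by
  simp only [Xset, ubar_reflectUtilities, sub_sub_cancel] at hw ⊢
  split_ifs at hw ⊢ <;> simp only [mem_singleton_iff, mem_Icc] at hw ⊢
  all_goals first | linarith | exact ⟨by linarith, by linarith⟩

lemma IsAbsSol.reflect {p : ℕ} {uA uB : Fin p → Polynomial ℝ} {z : ℝ → ℝ}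
    (hz : IsAbsSol uA uB z) :
    IsAbsSol (reflectUtilities uB) (reflectUtilities uA) (fun t => 1 - z t) := by
  obtain ⟨hz01, v, hv_mem, hv_int, hz_eq⟩ := hz
  refine ⟨fun t ht => ?_, -v, hv_mem.mono fun t => neg_mem_Xset_reflectUtilities,
    fun t ht => (hv_int t ht).neg, fun t ht => ?_⟩
  · exact ⟨by linarith [(hz01 t ht).2], by linarith [(hz01 t ht).1]⟩
  · simp only [Pi.neg_apply, intervalIntegral.integral_neg, hz_eq t ht]
    ring

theorem abstract_convergence_to_extremes_general
    {p : ℕ} (uA uB : Fin p → Polynomial ℝ)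
    (h0 : ubar uA 0 < ubar uB 0) (h1 : ubar uB 1 < ubar uA 1) :
    (∀ c : ℝ, c ∈ Set.Ioc (0:ℝ) 1 →
      (∀ y ∈ Set.Ioo (0:ℝ) c, ubar uA y < ubar uB y) →
      ∀ z : ℝ → ℝ, IsAbsSol uA uB z → z 0 ∈ Set.Ico (0:ℝ) c →
        Filter.Tendsto z Filter.atTop (nhds (0:ℝ))) ∧
    (∀ c : ℝ, c ∈ Set.Ico (0:ℝ) 1 →
      (∀ y ∈ Set.Ioo c 1, ubar uB y < ubar uA y) →
      ∀ z : ℝ → ℝ, IsAbsSol uA uB z → z 0 ∈ Set.Ioc c 1 →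
        Filter.Tendsto z Filter.atTop (nhds (1:ℝ))) := by
  refine ⟨fun c _ hB z hz hz0 => hz.tendsto_zero h0 hB hz0.2, fun c _ hA z hz hz0 => ?_⟩
  have hlim := hz.reflect.tendsto_zero (c := 1 - c)
    (by simpa [ubar_reflectUtilities] using h1)
    (fun y hy => by
      simpa [ubar_reflectUtilities] using hA (1 - y) ⟨by linarith [hy.2], by linarith [hy.1]⟩)
    (by linarith [hz0.1])
  simpa using (tendsto_const_nhds (x := (1:ℝ))).sub hlim

theorem abstract_convergence_to_extremes
    {p : ℕ} (hp : 0 < p) (uA uB : Fin p → Polynomial ℝ)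
    (h0 : ubar uA 0 < ubar uB 0) (h1 : ubar uB 1 < ubar uA 1) :
    (∀ c : ℝ, c ∈ Set.Ioc (0:ℝ) 1 →
      (∀ y ∈ Set.Ioo (0:ℝ) c, ubar uA y < ubar uB y) →
      ∀ z : ℝ → ℝ, IsAbsSol uA uB z → z 0 ∈ Set.Ico (0:ℝ) c →
        Filter.Tendsto z Filter.atTop (nhds (0:ℝ))) ∧
    (∀ c : ℝ, c ∈ Set.Ico (0:ℝ) 1 →
      (∀ y ∈ Set.Ioo c 1, ubar uB y < ubar uA y) →
      ∀ z : ℝ → ℝ, IsAbsSol uA uB z → z 0 ∈ Set.Ioc c 1 →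
        Filter.Tendsto z Filter.atTop (nhds (1:ℝ))) :=
  abstract_convergence_to_extremes_general uA uB h0 h1
end

section
/- Suppose a < q < b in [0,1] satisfy: ūB(y) > ūA(y) for all y ∈ (a, q); ūA(y) > ūB(y) for all y ∈ (q, b); either a = 0 and ūB(0) > ūA(0), or there is a₀ < a with ūA > ūB on (a₀, a); and either b = 1 and ūA(1) > ūB(1), or there is b₀ > b with ūB > ūA on (b, b₀). Then every solution z of the abstract imitation dynamics with z(0) = q converges, as t → ∞, to one of the three points a, q, b; moreover each of a, q, and b is the limit of some solution starting at q. In particular, the limit set of the point q equals {a, q, b}. -/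
open scoped Classical
open MeasureTheory Filter Set

/-!
On `(a, q)` the dynamics read `ż = -z ≤ a - z` and on `(q, b)` they read `ż = 1 - z`. Once a
solution starting at `q` has dropped below `q`, this drift keeps it below every level it has
reached in `[a, q)` and carries it below any level above `a` in bounded time; the condition at `a`
(the wall `0`, or the drift `ż = 1 - z ≥ 0` just below `a`) keeps it from crossing `a`. So it
converges to `a`; symmetrically a solution that rises above `q` converges to `b`, and one that
never leaves `q` is constant. Conversely `q` is a rest point (`ūA = ūB` there by continuity),
as are `a` and `b`, and the exponential curves `q e^{-t}` and `1 - (1 - q) e^{-t}`, stopped on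
reaching `a` and `b`, are solutions. The limit set of a convergent solution is its limit.
-/

open Topology

theorem eq_of_lt_of_gt_of_continuousAt {f g : ℝ → ℝ} {c x d : ℝ} (hf : ContinuousAt f x)
    (hg : ContinuousAt g x) (hcx : c < x) (hxd : x < d) (hl : ∀ y ∈ Ioo c x, f y < g y)
    (hr : ∀ y ∈ Ioo x d, g y < f y) : f x = g x :=
  le_antisymm
    (le_of_tendsto_of_tendsto (hf.tendsto.mono_left nhdsWithin_le_nhds)
      (hg.tendsto.mono_left nhdsWithin_le_nhds)
      (eventually_of_mem (Ioo_mem_nhdsLT hcx) fun y hy => (hl y hy).le))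
    (le_of_tendsto_of_tendsto (hg.tendsto.mono_left nhdsWithin_le_nhds)
      (hf.tendsto.mono_left nhdsWithin_le_nhds)
      (eventually_of_mem (Ioo_mem_nhdsGT hxd) fun y hy => (hr y hy).le))

theorem ContinuousOn.exists_crossing {f : ℝ → ℝ} {a b α β : ℝ} (hf : ContinuousOn f (Icc a b))
    (hab : a ≤ b) (ha : f a ≤ α) (hb : β ≤ f b) :
    ∃ s s', a ≤ s ∧ s ≤ s' ∧ s' ≤ b ∧ f s ≤ α ∧ β ≤ f s' ∧ ∀ t ∈ Ioo s s', f t ∈ Ioo α β := by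
  set S := Icc a b ∩ f ⁻¹' Iic α
  have hS : IsCompact S := isCompact_Icc.of_isClosed_subset
    (hf.preimage_isClosed_of_isClosed isClosed_Icc isClosed_Iic) inter_subset_left
  have hs : sSup S ∈ S := hS.sSup_mem ⟨a, ⟨le_rfl, hab⟩, ha⟩
  set S' := Icc (sSup S) b ∩ f ⁻¹' Ici β
  have hS' : IsCompact S' := isCompact_Icc.of_isClosed_subset
    ((hf.mono (Icc_subset_Icc_left hs.1.1)).preimage_isClosed_of_isClosed isClosed_Icc
      isClosed_Ici) inter_subset_left
  have hs' : sInf S' ∈ S' := hS'.sInf_mem ⟨b, ⟨hs.1.2, le_rfl⟩, hb⟩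
  refine ⟨sSup S, sInf S', hs.1.1, hs'.1.1, hs'.1.2, hs.2, hs'.2, fun t ht => ⟨?_, ?_⟩⟩
  · by_contra! hft
    exact ht.1.not_ge <| le_csSup hS.bddAbove
      ⟨⟨hs.1.1.trans ht.1.le, ht.2.le.trans hs'.1.2⟩, hft⟩
  · by_contra! hft
    exact ht.2.not_ge <| csInf_le hS'.bddBelow ⟨⟨ht.1.le, ht.2.le.trans hs'.1.2⟩, hft⟩

def IsPrimitive (z v : ℝ → ℝ) : Prop :=
  (∀ t, 0 ≤ t → IntervalIntegrable v volume 0 t) ∧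
    ∀ t, 0 ≤ t → z t = z 0 + ∫ s in (0:ℝ)..t, v s

namespace IsPrimitive

variable {z v : ℝ → ℝ}

theorem neg (h : IsPrimitive z v) : IsPrimitive (-z) (-v) := by
  refine ⟨fun t ht => (h.1 t ht).neg, fun t ht => ?_⟩
  simp only [Pi.neg_apply, intervalIntegral.integral_neg, h.2 t ht]
  ring

theorem intervalIntegrable (h : IsPrimitive z v) {s t : ℝ} (hs : 0 ≤ s) (hst : s ≤ t) :
    IntervalIntegrable v volume s t :=
  (h.1 s hs).symm.trans (h.1 t (hs.trans hst))

theorem sub_eq_integral (h : IsPrimitive z v) {s t : ℝ} (hs : 0 ≤ s) (hst : s ≤ t) :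
    z t - z s = ∫ u in s..t, v u := by
  rw [h.2 t (hs.trans hst), h.2 s hs,
    ← intervalIntegral.integral_add_adjacent_intervals (h.1 s hs) (h.intervalIntegrable hs hst)]
  ring

theorem continuousOn_Icc (h : IsPrimitive z v) {t : ℝ} (ht : 0 ≤ t) :
    ContinuousOn z (Icc 0 t) := by
  have hint : IntegrableOn v (uIcc 0 t) := by
    rw [uIcc_of_le ht]
    exact (intervalIntegrable_iff_integrableOn_Icc_of_le ht).1 (h.1 t ht)
  have hprim := intervalIntegral.continuousOn_primitive_interval hint
  rw [uIcc_of_le ht] at hprim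
  exact (continuousOn_const.add hprim).congr fun s hs => h.2 s hs.1

theorem sub_le_of_ae_le (h : IsPrimitive z v) {s t C : ℝ} (hs : 0 ≤ s) (hst : s ≤ t)
    (hv : ∀ᵐ u ∂volume.restrict (Ioo s t), v u ≤ C) : z t - z s ≤ C * (t - s) := by
  rw [h.sub_eq_integral hs hst]
  calc ∫ u in s..t, v u ≤ ∫ _ in s..t, C :=
        intervalIntegral.integral_mono_ae_restrict hst (h.intervalIntegrable hs hst)
          intervalIntegrable_const ((ae_restrict_congr_set Ioo_ae_eq_Icc).1 hv)
    _ = C * (t - s) := by rw [intervalIntegral.integral_const, smul_eq_mul, mul_comm]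

theorem le_of_ae_nonpos (h : IsPrimitive z v) {m m₂ s : ℝ} (hm : m < m₂)
    (hv : ∀ᵐ t ∂volume.restrict (Ici 0), z t ∈ Ioo m m₂ → v t ≤ 0) (hs : 0 ≤ s)
    (hzs : z s ≤ m) : ∀ t, s ≤ t → z t ≤ m := by
  intro t hst
  by_contra! hzt
  -- on the last rise from `m` to `min (z t) m₂` the velocity is `≤ 0`, so there is no rise
  obtain ⟨r, r', hsr, hrr', -, hzr, hzr', hcross⟩ :=
    ((h.continuousOn_Icc (hs.trans hst)).mono (Icc_subset_Icc_left hs)).exists_crossing hst hzs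
      (min_le_left (z t) m₂)
  have hr : 0 ≤ r := hs.trans hsr
  have hv' : ∀ᵐ u ∂volume.restrict (Ioo r r'), v u ≤ 0 := by
    filter_upwards [ae_restrict_of_ae_restrict_of_subset (fun u hu => hr.trans hu.1.le) hv,
      ae_restrict_mem measurableSet_Ioo] with u hu hmem
    exact hu ⟨(hcross u hmem).1, (hcross u hmem).2.trans_le (min_le_right _ _)⟩
  have hrise := h.sub_le_of_ae_le hr hrr' hv'
  linarith [lt_min hzt hm]

theorem ge_of_ae_nonneg (h : IsPrimitive z v) {m m₂ s : ℝ} (hm : m₂ < m)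
    (hv : ∀ᵐ t ∂volume.restrict (Ici 0), z t ∈ Ioo m₂ m → 0 ≤ v t) (hs : 0 ≤ s)
    (hzs : m ≤ z s) : ∀ t, s ≤ t → m ≤ z t := by
  intro t hst
  refine neg_le_neg_iff.1 (h.neg.le_of_ae_nonpos (neg_lt_neg hm) ?_ hs (neg_le_neg hzs) t hst)
  filter_upwards [hv] with u hu hz
  have hz' : -z u ∈ Ioo (-m) (-m₂) := hz
  exact neg_nonpos.2 (hu ⟨by linarith [hz'.2], by linarith [hz'.1]⟩)

theorem exists_le_of_ae_le_neg (h : IsPrimitive z v) {l d δ B t₀ : ℝ} (hδ : 0 < δ)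
    (hv : ∀ᵐ t ∂volume.restrict (Ici 0), z t ∈ Ioo l d → v t ≤ -δ) (ht₀ : 0 ≤ t₀)
    (hd : ∀ t, t₀ ≤ t → z t < d) (hB : ∀ t, t₀ ≤ t → B ≤ z t) : ∃ t, t₀ ≤ t ∧ z t ≤ l := by
  by_contra! hl
  -- by time `T` a velocity `≤ -δ` would have pushed `z` below `B`
  set T := t₀ + (z t₀ - B) / δ + 1
  have hT : T - t₀ = (z t₀ - B) / δ + 1 := by ring
  have hTt₀ : t₀ ≤ T := by
    have := div_nonneg (sub_nonneg.2 (hB t₀ le_rfl)) hδ.le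
    linarith
  have hv' : ∀ᵐ u ∂volume.restrict (Ioo t₀ T), v u ≤ -δ := by
    filter_upwards [ae_restrict_of_ae_restrict_of_subset (fun u hu => ht₀.trans hu.1.le) hv,
      ae_restrict_mem measurableSet_Ioo] with u hu hmem
    exact hu ⟨hl u hmem.1.le, hd u hmem.1.le⟩
  have hdrop := h.sub_le_of_ae_le ht₀ hTt₀ hv'
  rw [hT, neg_mul, mul_add, mul_div_cancel₀ _ hδ.ne', mul_one] at hdrop
  linarith [hB T hTt₀]

theorem tendsto_of_drift (h : IsPrimitive z v) {c d t₀ : ℝ}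
    (hdrift : ∀ᵐ t ∂volume.restrict (Ici 0), z t ∈ Ioo c d → v t ≤ c - z t)
    (hfloor : ∀ t, 0 ≤ t → c ≤ z t) (ht₀ : 0 ≤ t₀) (hzt₀ : z t₀ < d) :
    Tendsto z atTop (𝓝 c) := by
  have hcd : c < d := (hfloor t₀ ht₀).trans_lt hzt₀
  have hstay : ∀ m, c ≤ m → m < d → ∀ s, 0 ≤ s → z s ≤ m → ∀ t, s ≤ t → z t ≤ m :=
    fun m hcm hmd s => h.le_of_ae_nonpos (s := s) hmd <| hdrift.mono fun t ht hz =>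
      (ht ⟨hcm.trans_lt hz.1, hz.2⟩).trans (by linarith [hz.1])
  have hbelow : ∀ t, t₀ ≤ t → z t < d := fun t ht =>
    (hstay _ (le_max_left c (z t₀)) (max_lt hcd hzt₀) t₀ ht₀ (le_max_right _ _) t ht).trans_lt
      (max_lt hcd hzt₀)
  refine tendsto_order.2 ⟨fun c' hc' => eventually_atTop.2 ⟨0, fun t ht =>
    hc'.trans_le (hfloor t ht)⟩, fun c' hc' => ?_⟩
  obtain ⟨l, hcl, hlc'⟩ := exists_between (lt_min hc' hcd)
  obtain ⟨t₁, ht₁, hzt₁⟩ := h.exists_le_of_ae_le_neg (d := d) (sub_pos.2 hcl)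
    (hdrift.mono fun t ht hz => (ht ⟨hcl.trans hz.1, hz.2⟩).trans (by linarith [hz.1]))
    ht₀ hbelow fun t ht => hfloor t (ht₀.trans ht)
  exact eventually_atTop.2 ⟨t₁, fun t ht => (hstay l hcl.le (hlc'.trans_le (min_le_right _ _))
    t₁ (ht₀.trans ht₁) hzt₁ t ht).trans_lt (hlc'.trans_le (min_le_left _ _))⟩

end IsPrimitive

theorem HasDerivAt.const_max_of_ne {g : ℝ → ℝ} {g' l t : ℝ} (hg : HasDerivAt g g' t)
    (ht : g t ≠ l) : HasDerivAt (fun s => max l (g s)) (if l < g t then g' else 0) t := by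
  rcases ht.lt_or_gt with hlt | hgt
  · rw [if_neg hlt.not_gt]
    exact (hasDerivAt_const t l).congr_of_eventuallyEq
      ((hg.continuousAt.eventually_lt continuousAt_const hlt).mono fun s hs => max_eq_left hs.le)
  · rw [if_pos hgt]
    exact hg.congr_of_eventuallyEq
      ((continuousAt_const.eventually_lt hg.continuousAt hgt).mono fun s hs => max_eq_right hs.le)

theorem exists_isPrimitive_stopped_exp {r l q : ℝ} (hrl : r ≤ l) (hlq : l < q) :
    ∃ z v : ℝ → ℝ, IsPrimitive z v ∧ z 0 = q ∧ (∀ t, 0 ≤ t → z t ∈ Icc l q) ∧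
      (∀ t, v t = if l < z t then r - z t else 0) ∧ Tendsto z atTop (𝓝 l) := by
  set g : ℝ → ℝ := fun t => r + (q - r) * Real.exp (-t)
  have hg_cont : Continuous g := by fun_prop
  have hg : ∀ t, HasDerivAt g (r - g t) t := fun t =>
    (((hasDerivAt_neg t).exp.const_mul (q - r)).const_add r).congr_deriv (by simp only [g]; ring)
  have hg_inj : Function.Injective g := fun x y hxy => by
    simpa [g, (sub_pos.2 (hrl.trans_lt hlq)).ne'] using hxy
  set z : ℝ → ℝ := fun t => max l (g t)
  set v : ℝ → ℝ := {t | l < z t}.indicator fun t => r - z t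
  have hv : ∀ t, v t = if l < z t then r - z t else 0 := fun t => by
    simp only [v, indicator_apply]; rfl
  have hderiv : ∀ t, g t ≠ l → HasDerivAt z (v t) t := fun t ht =>
    ((hg t).const_max_of_ne ht).congr_deriv <| by
      simp only [hv, z, lt_max_iff, lt_irrefl, false_or]
      split_ifs with hlt
      · rw [max_eq_right hlt.le]
      · rfl
  have hz_cont : Continuous z := continuous_const.max hg_cont
  have hv_int : ∀ t, 0 ≤ t → IntervalIntegrable v volume 0 t := fun t ht =>
    (intervalIntegrable_iff_integrableOn_Icc_of_le ht).2 <|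
      (continuous_const.sub hz_cont).integrableOn_Icc.indicator
        (isOpen_lt continuous_const hz_cont).measurableSet
  refine ⟨z, v, ⟨hv_int, fun t ht => ?_⟩, by simp [z, g, hlq.le], fun t ht => ?_, hv, ?_⟩
  · -- `z` is differentiable except where `g` crosses `l`, which happens at most once.
    rw [integral_eq_of_hasDerivAt_off_countable_of_le z v ht
      (subsingleton_singleton.preimage hg_inj).countable hz_cont.continuousOn
      (fun s hs => hderiv s hs.2) (hv_int t ht)]
    ring
  · refine ⟨le_max_left _ _, max_le hlq.le ?_⟩
    have := Real.exp_le_one_iff.2 (neg_nonpos.2 ht)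
    have := sub_pos.2 (hrl.trans_lt hlq)
    simp only [g]
    nlinarith
  · have hlim := (tendsto_const_nhds (x := l)).max
      ((Real.tendsto_exp_neg_atTop_nhds_zero.const_mul (q - r)).const_add r)
    rwa [mul_zero, add_zero, max_eq_left hrl] at hlim

theorem Filter.Tendsto.biInter_closure_image_Ici {X : Type*} [TopologicalSpace X] [T2Space X]
    {z : ℝ → X} {l : X} (h : Tendsto z atTop (𝓝 l)) :
    ⋂ t ∈ Ici (0:ℝ), closure (z '' Ici t) = {l} := by
  ext x
  have hcluster : x ∈ ⋂ t ∈ Ici (0:ℝ), closure (z '' Ici t) ↔ MapClusterPt x atTop z := by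
    simp only [mapClusterPt_atTop_iff_forall_mem_closure, mem_iInter₂, mem_Ici]
    exact ⟨fun hx t => closure_mono (image_mono (Ici_subset_Ici.2 (le_max_left t 0)))
      (hx _ (le_max_right t 0)), fun hx t _ => hx t⟩
  rw [hcluster, mem_singleton_iff]
  refine ⟨fun hx => ?_, fun hx => hx ▸ h.mapClusterPt⟩
  by_contra hne
  exact clusterPt_iff_not_disjoint.1 (ClusterPt.mono hx h) (disjoint_nhds_nhds.2 hne)

theorem biUnion_biInter_closure_image_Ici_eq {X : Type*} [TopologicalSpace X] [T2Space X]
    {S : Set (ℝ → X)} {L : Set X} (hS : ∀ z ∈ S, ∃ l ∈ L, Tendsto z atTop (𝓝 l))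
    (hL : ∀ l ∈ L, ∃ z ∈ S, Tendsto z atTop (𝓝 l)) :
    ⋃ z ∈ S, ⋂ t ∈ Ici (0:ℝ), closure (z '' Ici t) = L := by
  ext x
  simp only [mem_iUnion, exists_prop]
  constructor
  · rintro ⟨z, hz, hx⟩
    obtain ⟨l, hl, hlim⟩ := hS z hz
    rw [hlim.biInter_closure_image_Ici, mem_singleton_iff] at hx
    rwa [hx]
  · intro hx
    obtain ⟨z, hz, hlim⟩ := hL x hx
    exact ⟨z, hz, by rw [hlim.biInter_closure_image_Ici]; rfl⟩

section Dynamics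

variable {p : ℕ} {uA uB : Fin p → Polynomial ℝ}

theorem ubar_continuous (u : Fin p → Polynomial ℝ) : Continuous (ubar u) := by
  rcases isEmpty_or_nonempty (Fin p) with hp | hp
  · have h : ubar u = fun _ => 0 := funext fun y => Real.iSup_of_isEmpty _
    rw [h]
    exact continuous_const
  · have h : ubar u = fun y => Finset.univ.sup' Finset.univ_nonempty fun i => (u i).eval y :=
      funext fun y => (Finset.sup'_univ_eq_ciSup _).symm
    rw [h]
    exact Continuous.finset_sup'_apply _ fun i _ => (u i).continuous

theorem ubar_eq_of_lt_of_gt {f g : Fin p → Polynomial ℝ} {c x d : ℝ} (hcx : c < x) (hxd : x < d)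
    (hl : ∀ y ∈ Ioo c x, ubar f y < ubar g y) (hr : ∀ y ∈ Ioo x d, ubar g y < ubar f y) :
    ubar f x = ubar g x :=
  eq_of_lt_of_gt_of_continuousAt (ubar_continuous f).continuousAt
    (ubar_continuous g).continuousAt hcx hxd hl hr

theorem Xset_eq_one_sub {y : ℝ} (h : ubar uB y < ubar uA y) : Xset uA uB y = {1 - y} := by
  rw [Xset, if_pos h]

theorem Xset_eq_neg {y : ℝ} (h : ubar uA y < ubar uB y) : Xset uA uB y = {-y} := by
  rw [Xset, if_neg h.not_gt, if_pos h]

theorem Xset_eq_Icc {y : ℝ} (h : ubar uA y = ubar uB y) : Xset uA uB y = Icc (-y) (1 - y) := by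
  rw [Xset, if_neg h.symm.not_lt, if_neg h.not_lt]

theorem isAbsSol_const {q : ℝ} (hq : ubar uA q = ubar uB q) (hq0 : 0 ≤ q) (hq1 : q ≤ 1) :
    IsAbsSol uA uB fun _ => q := by
  refine ⟨fun _ _ => ⟨hq0, hq1⟩, 0, ae_of_all _ fun _ => ?_, fun _ _ => intervalIntegrable_const,
    fun _ _ => by simp⟩
  rw [Xset_eq_Icc hq]
  exact ⟨by simpa using hq0, by simpa using hq1⟩

variable {z v : ℝ → ℝ}

theorem tendsto_left_of_lt {a q t₀ : ℝ} (hz01 : ∀ t, 0 ≤ t → z t ∈ Icc (0:ℝ) 1)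
    (hX : ∀ᵐ t ∂volume.restrict (Ici 0), v t ∈ Xset uA uB (z t)) (hP : IsPrimitive z v)
    (ha : 0 ≤ a) (haq : a < q) (hleft : ∀ y ∈ Ioo a q, ubar uA y < ubar uB y)
    (hA : a = 0 ∨ ∃ a₀ < a, ∀ y ∈ Ioo a₀ a, ubar uB y < ubar uA y)
    (hz0 : z 0 = q) (ht₀ : 0 ≤ t₀) (hlt : z t₀ < q) : Tendsto z atTop (𝓝 a) := by
  refine hP.tendsto_of_drift ?_ ?_ ht₀ hlt
  · filter_upwards [hX] with t ht hz
    rw [Xset_eq_neg (hleft _ hz), mem_singleton_iff] at ht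
    linarith
  · rcases hA with rfl | ⟨a₀, ha₀, hout⟩
    · exact fun t ht => (hz01 t ht).1
    · refine hP.ge_of_ae_nonneg ha₀ ?_ le_rfl (hz0 ▸ haq.le)
      filter_upwards [hX, ae_restrict_mem measurableSet_Ici] with t ht ht0 hz
      rw [Xset_eq_one_sub (hout _ hz), mem_singleton_iff] at ht
      linarith [(hz01 t ht0).2]

theorem tendsto_right_of_gt {q b t₀ : ℝ} (hz01 : ∀ t, 0 ≤ t → z t ∈ Icc (0:ℝ) 1)
    (hX : ∀ᵐ t ∂volume.restrict (Ici 0), v t ∈ Xset uA uB (z t)) (hP : IsPrimitive z v)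
    (hb : b ≤ 1) (hqb : q < b) (hright : ∀ y ∈ Ioo q b, ubar uB y < ubar uA y)
    (hB : b = 1 ∨ ∃ b₀ > b, ∀ y ∈ Ioo b b₀, ubar uA y < ubar uB y)
    (hz0 : z 0 = q) (ht₀ : 0 ≤ t₀) (hgt : q < z t₀) : Tendsto z atTop (𝓝 b) := by
  have hneg : Tendsto (-z) atTop (𝓝 (-b)) := by
    refine hP.neg.tendsto_of_drift (d := -q) ?_ ?_ ht₀ (neg_lt_neg hgt)
    · filter_upwards [hX] with t ht hz
      have hz' : -z t ∈ Ioo (-b) (-q) := hz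
      rw [Xset_eq_one_sub (hright _ ⟨by linarith [hz'.2], by linarith [hz'.1]⟩),
        mem_singleton_iff] at ht
      simp only [Pi.neg_apply]
      linarith
    · rcases hB with rfl | ⟨b₀, hb₀, hout⟩
      · exact fun t ht => neg_le_neg (hz01 t ht).2
      · refine fun t ht => neg_le_neg (hP.le_of_ae_nonpos hb₀ ?_ le_rfl (hz0 ▸ hqb.le) t ht)
        filter_upwards [hX, ae_restrict_mem measurableSet_Ici] with t ht ht0 hz
        rw [Xset_eq_neg (hout _ hz), mem_singleton_iff] at ht
        linarith [(hz01 t ht0).1]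
  simpa using hneg.neg

theorem tendsto_of_isAbsSol {a q b : ℝ} (ha : 0 ≤ a) (hb : b ≤ 1) (haq : a < q) (hqb : q < b)
    (hleft : ∀ y ∈ Ioo a q, ubar uA y < ubar uB y)
    (hright : ∀ y ∈ Ioo q b, ubar uB y < ubar uA y)
    (hA : a = 0 ∨ ∃ a₀ < a, ∀ y ∈ Ioo a₀ a, ubar uB y < ubar uA y)
    (hB : b = 1 ∨ ∃ b₀ > b, ∀ y ∈ Ioo b b₀, ubar uA y < ubar uB y)
    (hz : IsAbsSol uA uB z) (hz0 : z 0 = q) :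
    ∃ l ∈ ({a, q, b} : Set ℝ), Tendsto z atTop (𝓝 l) := by
  obtain ⟨hz01, v, hX, hP⟩ := hz
  by_cases hlt : ∃ t, 0 ≤ t ∧ z t < q
  · obtain ⟨t₀, ht₀, hlt⟩ := hlt
    exact ⟨a, .inl rfl, tendsto_left_of_lt hz01 hX hP ha haq hleft hA hz0 ht₀ hlt⟩
  by_cases hgt : ∃ t, 0 ≤ t ∧ q < z t
  · obtain ⟨t₀, ht₀, hgt⟩ := hgt
    exact ⟨b, .inr (.inr rfl), tendsto_right_of_gt hz01 hX hP hb hqb hright hB hz0 ht₀ hgt⟩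
  push Not at hlt hgt
  exact ⟨q, .inr (.inl rfl), tendsto_atTop_of_eventually_const (i₀ := 0) fun t ht =>
    le_antisymm (hgt t ht) (hlt t ht)⟩

theorem exists_isAbsSol_tendsto_left {a q : ℝ} (ha : 0 ≤ a) (hq1 : q ≤ 1) (haq : a < q)
    (hleft : ∀ y ∈ Ioo a q, ubar uA y < ubar uB y) (hq : ubar uA q = ubar uB q)
    (hrest : 0 ∈ Xset uA uB a) :
    ∃ z, IsAbsSol uA uB z ∧ z 0 = q ∧ Tendsto z atTop (𝓝 a) := by
  obtain ⟨z, v, hP, hz0, hzI, hv, hlim⟩ := exists_isPrimitive_stopped_exp (r := 0) ha haq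
  refine ⟨z, ⟨fun t ht => ⟨ha.trans (hzI t ht).1, (hzI t ht).2.trans hq1⟩, v,
    ae_restrict_of_forall_mem measurableSet_Ici fun t ht => ?_, hP⟩, hz0, hlim⟩
  obtain ⟨hlo, hhi⟩ := hzI t ht
  rw [hv]
  rcases hlo.eq_or_lt with h | h
  · rwa [if_neg h.not_lt, ← h]
  rw [if_pos h, zero_sub]
  rcases hhi.lt_or_eq with h' | h'
  · rw [Xset_eq_neg (hleft _ ⟨h, h'⟩)]
    rfl
  · rw [h', Xset_eq_Icc hq]
    exact ⟨le_rfl, by linarith⟩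

theorem exists_isAbsSol_tendsto_right {q b : ℝ} (hq0 : 0 ≤ q) (hb : b ≤ 1) (hqb : q < b)
    (hright : ∀ y ∈ Ioo q b, ubar uB y < ubar uA y) (hq : ubar uA q = ubar uB q)
    (hrest : 0 ∈ Xset uA uB b) :
    ∃ z, IsAbsSol uA uB z ∧ z 0 = q ∧ Tendsto z atTop (𝓝 b) := by
  obtain ⟨z, v, hP, hz0, hzI, hv, hlim⟩ :=
    exists_isPrimitive_stopped_exp (r := -1) (l := -b) (q := -q) (by linarith) (by linarith)
  refine ⟨-z, ⟨fun t ht => ⟨?_, ?_⟩, -v,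
    ae_restrict_of_forall_mem measurableSet_Ici fun t ht => ?_, hP.neg⟩, ?_, ?_⟩
  · show 0 ≤ -z t
    linarith [(hzI t ht).2]
  · show -z t ≤ 1
    linarith [(hzI t ht).1]
  · obtain ⟨hlo, hhi⟩ := hzI t ht
    simp only [Pi.neg_apply, hv]
    rcases hlo.eq_or_lt with h | h
    · rwa [if_neg h.not_lt, neg_zero, ← h, neg_neg]
    rw [if_pos h]
    rcases hhi.lt_or_eq with h' | h'
    · rw [Xset_eq_one_sub (hright _ ⟨by linarith, by linarith⟩)]
      exact mem_singleton_iff.2 (by ring)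
    · rw [h', neg_neg, Xset_eq_Icc hq]
      exact ⟨by linarith, by linarith⟩
  · simp [hz0]
  · have hlim' := hlim.neg
    rwa [neg_neg] at hlim'

theorem zero_mem_Xset_left {a q : ℝ} (ha : 0 ≤ a) (ha1 : a ≤ 1) (haq : a < q)
    (hleft : ∀ y ∈ Ioo a q, ubar uA y < ubar uB y)
    (hA : (a = 0 ∧ ubar uA 0 < ubar uB 0) ∨ ∃ a₀ < a, ∀ y ∈ Ioo a₀ a, ubar uB y < ubar uA y) :
    0 ∈ Xset uA uB a := by
  rcases hA with ⟨rfl, h⟩ | ⟨a₀, ha₀, hout⟩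
  · simp [Xset_eq_neg h]
  · rw [Xset_eq_Icc (ubar_eq_of_lt_of_gt ha₀ haq hout hleft).symm]
    exact ⟨by linarith, by linarith⟩

theorem zero_mem_Xset_right {q b : ℝ} (hb0 : 0 ≤ b) (hb : b ≤ 1) (hqb : q < b)
    (hright : ∀ y ∈ Ioo q b, ubar uB y < ubar uA y)
    (hB : (b = 1 ∧ ubar uB 1 < ubar uA 1) ∨ ∃ b₀ > b, ∀ y ∈ Ioo b b₀, ubar uA y < ubar uB y) :
    0 ∈ Xset uA uB b := by
  rcases hB with ⟨rfl, h⟩ | ⟨b₀, hb₀, hout⟩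
  · simp [Xset_eq_one_sub h]
  · rw [Xset_eq_Icc (ubar_eq_of_lt_of_gt hqb hb₀ hright hout).symm]
    exact ⟨by linarith, by linarith⟩

end Dynamics

theorem abstract_limit_set_of_nonattracting_point_general
    {p : ℕ} (uA uB : Fin p → Polynomial ℝ)
    (a q b : ℝ) (ha : 0 ≤ a) (hb : b ≤ 1) (haq : a < q) (hqb : q < b)
    (hleft : ∀ y ∈ Set.Ioo a q, ubar uA y < ubar uB y)
    (hright : ∀ y ∈ Set.Ioo q b, ubar uB y < ubar uA y)
    (hA : (a = 0 ∧ ubar uA 0 < ubar uB 0) ∨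
      ∃ a₀ < a, ∀ y ∈ Set.Ioo a₀ a, ubar uB y < ubar uA y)
    (hB : (b = 1 ∧ ubar uB 1 < ubar uA 1) ∨
      ∃ b₀ > b, ∀ y ∈ Set.Ioo b b₀, ubar uA y < ubar uB y) :
    (∀ z : ℝ → ℝ, IsAbsSol uA uB z → z 0 = q →
      Filter.Tendsto z Filter.atTop (nhds a) ∨
      Filter.Tendsto z Filter.atTop (nhds q) ∨
      Filter.Tendsto z Filter.atTop (nhds b)) ∧
    (∀ l ∈ ({a, q, b} : Set ℝ), ∃ z : ℝ → ℝ,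
      IsAbsSol uA uB z ∧ z 0 = q ∧ Filter.Tendsto z Filter.atTop (nhds l)) ∧
    (⋃ z ∈ {z : ℝ → ℝ | IsAbsSol uA uB z ∧ z 0 = q},
        ⋂ t ∈ Set.Ici (0:ℝ), closure (z '' Set.Ici t)) = {a, q, b} := by
  have hq : ubar uA q = ubar uB q := ubar_eq_of_lt_of_gt haq hqb hleft hright
  have hlim : ∀ z, IsAbsSol uA uB z → z 0 = q → ∃ l ∈ ({a, q, b} : Set ℝ),
      Tendsto z atTop (𝓝 l) :=
    fun z => tendsto_of_isAbsSol ha hb haq hqb hleft hright (hA.imp_left And.left)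
      (hB.imp_left And.left)
  have hexists : ∀ l ∈ ({a, q, b} : Set ℝ), ∃ z, IsAbsSol uA uB z ∧ z 0 = q ∧
      Tendsto z atTop (𝓝 l) := by
    rintro l (rfl | rfl | rfl)
    · exact exists_isAbsSol_tendsto_left ha (hqb.le.trans hb) haq hleft hq
        (zero_mem_Xset_left ha (by linarith) haq hleft hA)
    · exact ⟨_, isAbsSol_const hq (by linarith) (by linarith), rfl, tendsto_const_nhds⟩
    · exact exists_isAbsSol_tendsto_right (by linarith) hb hqb hright hq
        (zero_mem_Xset_right (by linarith) hb hqb hright hB)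
  refine ⟨fun z hz hz0 => ?_, hexists, biUnion_biInter_closure_image_Ici_eq
    (fun z hz => hlim z hz.1 hz.2) fun l hl => ?_⟩
  · obtain ⟨l, hl, hzl⟩ := hlim z hz hz0
    rcases hl with rfl | rfl | rfl <;> simp only [hzl, true_or, or_true]
  · obtain ⟨z, hz, hz0, hzl⟩ := hexists l hl
    exact ⟨z, ⟨hz, hz0⟩, hzl⟩

theorem abstract_limit_set_of_nonattracting_point
    {p : ℕ} (hp : 0 < p) (uA uB : Fin p → Polynomial ℝ)
    (a q b : ℝ) (ha : 0 ≤ a) (hb : b ≤ 1) (haq : a < q) (hqb : q < b)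
    (hleft : ∀ y ∈ Set.Ioo a q, ubar uA y < ubar uB y)
    (hright : ∀ y ∈ Set.Ioo q b, ubar uB y < ubar uA y)
    (hA : (a = 0 ∧ ubar uA 0 < ubar uB 0) ∨
      ∃ a₀ < a, ∀ y ∈ Set.Ioo a₀ a, ubar uB y < ubar uA y)
    (hB : (b = 1 ∧ ubar uB 1 < ubar uA 1) ∨
      ∃ b₀ > b, ∀ y ∈ Set.Ioo b b₀, ubar uA y < ubar uB y) :
    (∀ z : ℝ → ℝ, IsAbsSol uA uB z → z 0 = q →
      Filter.Tendsto z Filter.atTop (nhds a) ∨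
      Filter.Tendsto z Filter.atTop (nhds q) ∨
      Filter.Tendsto z Filter.atTop (nhds b)) ∧
    (∀ l ∈ ({a, q, b} : Set ℝ), ∃ z : ℝ → ℝ,
      IsAbsSol uA uB z ∧ z 0 = q ∧ Filter.Tendsto z Filter.atTop (nhds l)) ∧
    (⋃ z ∈ {z : ℝ → ℝ | IsAbsSol uA uB z ∧ z 0 = q},
        ⋂ t ∈ Set.Ici (0:ℝ), closure (z '' Set.Ici t)) = {a, q, b} :=
  abstract_limit_set_of_nonattracting_point_general uA uB a q b ha hb haq hqb hleft hright hA hB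
end

section
/- Assume ūB(0) > ūA(0) and ūA(1) > ūB(1). Then a point x ∈ 𝒳_s satisfies 0 ∈ 𝒱(x) if and only if x = qρ for some q ∈ [0,1] such that q = 0, or q = 1, or ūA(q) = ūB(q). In particular, the equilibria of the continuous-time imitation population dynamics are exactly the points qρ where q ranges over the equilibria of the abstract dynamics, so the two dynamics have the same number of equilibria. -/
open scoped Classical
open MeasureTheory Filter Set

/-- The state space `ℝ^p`, with the Euclidean norm. -/
abbrev Vec (p : ℕ) := EuclideanSpace ℝ (Fin p)

/-- The total proportion of `A`-players: `σ(x) = Σ_i x_i`. -/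
noncomputable def sigma' {p : ℕ} (x : Vec p) : ℝ := ∑ i, x i

/-- The state space `𝒳_s = ∏_i [0, ρ_i]`. -/
def Xs {p : ℕ} (ρ : Vec p) : Set (Vec p) := {x | ∀ i, x i ∈ Set.Icc 0 (ρ i)}

/-- The set-valued map of the continuous-time imitation population dynamics. -/
noncomputable def Vmap {p : ℕ} (ρ : Vec p) (uA uB : Fin p → Polynomial ℝ)
    (x : Vec p) : Set (Vec p) :=
  if x ∈ interior (Xs ρ) ∧ ubar uB (sigma' x) < ubar uA (sigma' x) then {ρ - x}
  else if x ∈ interior (Xs ρ) ∧ ubar uA (sigma' x) < ubar uB (sigma' x) then {-x}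
  else segment ℝ (ρ - x) (-x)

/-- A Carathéodory solution of the continuous-time imitation population dynamics on `[0,∞)`:
a locally absolutely continuous `𝒳_s`-valued function whose derivative lies in `Vmap`
almost everywhere, expressed in integral form. -/
def IsPopSol {p : ℕ} (ρ : Vec p) (uA uB : Fin p → Polynomial ℝ) (x : ℝ → Vec p) : Prop :=
  (∀ t, 0 ≤ t → x t ∈ Xs ρ) ∧
  ∃ v : ℝ → Vec p,
    (∀ᵐ t ∂(MeasureTheory.volume.restrict (Set.Ici (0:ℝ))), v t ∈ Vmap ρ uA uB (x t)) ∧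
    (∀ t, 0 ≤ t → IntervalIntegrable v MeasureTheory.volume 0 t) ∧
    (∀ t, 0 ≤ t → x t = x 0 + ∫ s in (0:ℝ)..t, v s)

/-! The singleton branches of `Vmap` never contain `0`: they would force `x = ρ` or `x = 0`,
which lie on the boundary of `𝒳_s`. So `0 ∈ 𝒱(x)` means `0 ∈ [ρ - x, -x]`, i.e. `x = qρ` with
`q ∈ [0,1]`, together with `ūA = ūB` at `σ(qρ) = q` whenever `qρ` is interior, i.e. `q ∈ (0,1)`.
Since `q ↦ qρ` is injective, the two sets of equilibria have the same cardinality. -/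

namespace Xs

variable {p : ℕ} {ρ x : Vec p}

theorem mem_interior_iff : x ∈ interior (Xs ρ) ↔ ∀ i, x i ∈ Set.Ioo 0 (ρ i) := by
  have hXs : Xs ρ = (PiLp.continuousLinearEquiv 2 ℝ (fun _ : Fin p => ℝ)).toHomeomorph ⁻¹'
      Set.pi Set.univ fun i => Set.Icc 0 (ρ i) := by
    ext y
    simp only [Xs, Set.mem_ofPred_eq, Set.mem_preimage, Set.mem_pi, Set.mem_univ,
      forall_true_left]
    rfl
  rw [hXs, ← Homeomorph.preimage_interior, interior_pi_set Set.finite_univ]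
  simp only [Set.mem_preimage, Set.mem_pi, Set.mem_univ, forall_true_left, interior_Icc]
  rfl

theorem self_notMem_interior (hp : 0 < p) : ρ ∉ interior (Xs ρ) := fun h =>
  lt_irrefl _ (mem_interior_iff.mp h ⟨0, hp⟩).2

theorem zero_notMem_interior (hp : 0 < p) : (0 : Vec p) ∉ interior (Xs ρ) := fun h =>
  lt_irrefl _ (mem_interior_iff.mp h ⟨0, hp⟩).1

theorem smul_mem (hρ : ∀ i, 0 ≤ ρ i) {q : ℝ} (hq : q ∈ Set.Icc 0 1) : q • ρ ∈ Xs ρ := fun i =>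
  ⟨mul_nonneg hq.1 (hρ i), mul_le_of_le_one_left (hρ i) hq.2⟩

theorem smul_mem_interior_iff (hp : 0 < p) (hρ : ∀ i, 0 < ρ i) {q : ℝ} :
    q • ρ ∈ interior (Xs ρ) ↔ q ∈ Set.Ioo 0 1 := by
  simp only [mem_interior_iff, PiLp.smul_apply, smul_eq_mul, Set.mem_Ioo]
  constructor
  · intro h
    have hρ0 := hρ ⟨0, hp⟩
    obtain ⟨hpos, hlt⟩ := h ⟨0, hp⟩
    exact ⟨pos_of_mul_pos_left hpos hρ0.le, (mul_lt_iff_lt_one_left hρ0).mp hlt⟩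
  · rintro ⟨hq0, hq1⟩ i
    exact ⟨mul_pos hq0 (hρ i), mul_lt_of_lt_one_left (hρ i) hq1⟩

end Xs

theorem sigma'_smul {p : ℕ} {ρ : Vec p} (hsum : ∑ i, ρ i = 1) (q : ℝ) : sigma' (q • ρ) = q := by
  simp only [sigma', PiLp.smul_apply, smul_eq_mul, ← Finset.mul_sum, hsum, mul_one]

theorem zero_mem_segment_sub_neg_iff {p : ℕ} (ρ x : Vec p) :
    (0 : Vec p) ∈ segment ℝ (ρ - x) (-x) ↔ ∃ q ∈ Set.Icc (0:ℝ) 1, x = q • ρ := by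
  constructor
  · rintro ⟨a, b, ha, hb, hab, h⟩
    refine ⟨a, ⟨ha, by linarith⟩, ?_⟩
    ext i
    have hi := congrArg (fun v : Vec p => v i) h
    simp only [PiLp.add_apply, PiLp.smul_apply, PiLp.sub_apply, PiLp.neg_apply,
      smul_eq_mul, PiLp.zero_apply] at hi ⊢
    linear_combination -hi - x i * hab
  · rintro ⟨q, ⟨hq0, hq1⟩, rfl⟩
    refine ⟨q, 1 - q, hq0, by linarith, by ring, ?_⟩
    ext i
    simp only [PiLp.add_apply, PiLp.smul_apply, PiLp.sub_apply, PiLp.neg_apply,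
      smul_eq_mul, PiLp.zero_apply]
    ring

theorem zero_mem_Vmap_iff {p : ℕ} (hp : 0 < p) (ρ : Vec p) (uA uB : Fin p → Polynomial ℝ)
    (x : Vec p) :
    (0 : Vec p) ∈ Vmap ρ uA uB x ↔ (0 : Vec p) ∈ segment ℝ (ρ - x) (-x) ∧
      (x ∈ interior (Xs ρ) → ubar uA (sigma' x) = ubar uB (sigma' x)) := by
  unfold Vmap
  split_ifs with hA hB
  · refine iff_of_false ?_ fun h => hA.2.ne' (h.2 hA.1)
    rw [Set.mem_singleton_iff, eq_comm, sub_eq_zero]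
    rintro rfl
    exact Xs.self_notMem_interior hp hA.1
  · refine iff_of_false ?_ fun h => hB.2.ne (h.2 hB.1)
    rw [Set.mem_singleton_iff, eq_comm, neg_eq_zero]
    rintro rfl
    exact Xs.zero_notMem_interior hp hB.1
  · push Not at hA hB
    exact ⟨fun h => ⟨h, fun hx => le_antisymm (hA hx) (hB hx)⟩, And.left⟩

theorem zero_mem_Vmap_iff_eq_smul {p : ℕ} (hp : 0 < p) {ρ : Vec p} (hρ : ∀ i, 0 < ρ i)
    (hsum : ∑ i, ρ i = 1) (uA uB : Fin p → Polynomial ℝ) (x : Vec p) :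
    (0 : Vec p) ∈ Vmap ρ uA uB x ↔
      ∃ q ∈ Set.Icc (0:ℝ) 1, x = q • ρ ∧ (q = 0 ∨ q = 1 ∨ ubar uA q = ubar uB q) := by
  rw [zero_mem_Vmap_iff hp, zero_mem_segment_sub_neg_iff]
  constructor
  · rintro ⟨⟨q, hq, rfl⟩, hcrit⟩
    refine ⟨q, hq, rfl, ?_⟩
    rw [Xs.smul_mem_interior_iff hp hρ, sigma'_smul hsum] at hcrit
    by_cases hq0 : q = 0
    · exact Or.inl hq0
    by_cases hq1 : q = 1
    · exact Or.inr (Or.inl hq1)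
    exact Or.inr (Or.inr (hcrit ⟨hq.1.lt_of_ne' hq0, hq.2.lt_of_ne hq1⟩))
  · rintro ⟨q, hq, rfl, hcrit⟩
    refine ⟨⟨q, hq, rfl⟩, ?_⟩
    rw [Xs.smul_mem_interior_iff hp hρ, sigma'_smul hsum]
    rintro ⟨hq0, hq1⟩
    rcases hcrit with rfl | rfl | h
    exacts [absurd hq0 (lt_irrefl 0), absurd hq1 (lt_irrefl 1), h]

theorem population_equilibria_characterization_general
    {p : ℕ} (hp : 0 < p) (ρ : Vec p) (hρ : ∀ i, 0 < ρ i) (hsum : ∑ i, ρ i = 1)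
    (uA uB : Fin p → Polynomial ℝ) :
    (∀ x ∈ Xs ρ, ((0 : Vec p) ∈ Vmap ρ uA uB x ↔
      ∃ q ∈ Set.Icc (0:ℝ) 1, x = q • ρ ∧
        (q = 0 ∨ q = 1 ∨ ubar uA q = ubar uB q))) ∧
    {x : Vec p | x ∈ Xs ρ ∧ (0 : Vec p) ∈ Vmap ρ uA uB x}.ncard
      = {q ∈ Set.Icc (0:ℝ) 1 | q = 0 ∨ q = 1 ∨ ubar uA q = ubar uB q}.ncard := by
  have hequil := zero_mem_Vmap_iff_eq_smul hp hρ hsum uA uB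
  refine ⟨fun x _ => hequil x, ?_⟩
  have hset : {x : Vec p | x ∈ Xs ρ ∧ (0 : Vec p) ∈ Vmap ρ uA uB x} =
      (· • ρ) '' {q ∈ Set.Icc (0:ℝ) 1 | q = 0 ∨ q = 1 ∨ ubar uA q = ubar uB q} := by
    ext x
    simp only [Set.mem_ofPred_eq, Set.mem_image, hequil, and_assoc]
    constructor
    · rintro ⟨-, q, hq, rfl, hcrit⟩
      exact ⟨q, hq, hcrit, rfl⟩
    · rintro ⟨q, hq, hcrit, rfl⟩
      exact ⟨Xs.smul_mem (fun i => (hρ i).le) hq, q, hq, rfl, hcrit⟩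
  rw [hset, Set.ncard_image_of_injective]
  intro a b hab
  simpa only [sigma'_smul hsum] using congrArg sigma' hab

theorem population_equilibria_characterization
    {p : ℕ} (hp : 0 < p) (ρ : Vec p) (hρ : ∀ i, 0 < ρ i) (hsum : ∑ i, ρ i = 1)
    (uA uB : Fin p → Polynomial ℝ)
    (h0 : ubar uA 0 < ubar uB 0) (h1 : ubar uB 1 < ubar uA 1) :
    (∀ x ∈ Xs ρ, ((0 : Vec p) ∈ Vmap ρ uA uB x ↔
      ∃ q ∈ Set.Icc (0:ℝ) 1, x = q • ρ ∧
        (q = 0 ∨ q = 1 ∨ ubar uA q = ubar uB q))) ∧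
    {x : Vec p | x ∈ Xs ρ ∧ (0 : Vec p) ∈ Vmap ρ uA uB x}.ncard
      = {q ∈ Set.Icc (0:ℝ) 1 | q = 0 ∨ q = 1 ∨ ubar uA q = ubar uB q}.ncard :=
  population_equilibria_characterization_general hp ρ hρ hsum uA uB
end
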